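/- Define the operator L := |e₁⟩⟨e₁| ⊗ |e₁⟩⟨e₁| + |e₁⟩⟨e₂| ⊗ |e₁⟩⟨e₂| on ℂ² ⊗ ℂ². Then L maps every vector to a scalar multiple of the separable vector e₁ ⊗ e₁, yet neither L nor S·L (S the swap operator) can be written as an elementary tensor P ⊗ Q of operators P, Q on ℂ², even allowing singular P, Q. -/

import Mathlib

noncomputable section

/-- The elementary tensor `a ⊗ b` in `ℂ² ⊗ ℂ² ≅ ℂ^(2×2)`. -/
def tens (a b : EuclideanSpace ℂ (Fin 2)) : EuclideanSpace ℂ (Fin 2 × Fin 2) :=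
  WithLp.toLp 2 (fun p : Fin 2 × Fin 2 => a p.1 * b p.2)

/-- The first standard basis vector `e₁` of `ℂ²`. -/
def e0 : EuclideanSpace ℂ (Fin 2) := EuclideanSpace.single 0 1

/-- The operator `L = |e₁⟩⟨e₁| ⊗ |e₁⟩⟨e₁| + |e₁⟩⟨e₂| ⊗ |e₁⟩⟨e₂|` on `ℂ² ⊗ ℂ²`,
which acts as `z ↦ (z₍₀,₀₎ + z₍₁,₁₎) • (e₁ ⊗ e₁)`. -/
def L19 : EuclideanSpace ℂ (Fin 2 × Fin 2) →ₗ[ℂ] EuclideanSpace ℂ (Fin 2 × Fin 2) where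
  toFun z := (z (0, 0) + z (1, 1)) • tens e0 e0
  map_add' x y := by
    simp only [PiLp.add_apply]
    module
  map_smul' c x := by
    simp only [PiLp.smul_apply, RingHom.id_apply, smul_eq_mul, smul_smul]
    ring_nf


lemma mul_ne_zero_of_diag {α M₀ : Type*} [MulZeroClass M₀] [NoZeroDivisors M₀] {p q : α → M₀}
    {x y : α} (hx : p x * q x ≠ 0) (hy : p y * q y ≠ 0) : p x * q y ≠ 0 :=
  mul_ne_zero (left_ne_zero_of_mul hx) (right_ne_zero_of_mul hy)

lemma tens_apply (a b : EuclideanSpace ℂ (Fin 2)) (i : Fin 2 × Fin 2) :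
    tens a b i = a i.1 * b i.2 := rfl

lemma L19_apply (z : EuclideanSpace ℂ (Fin 2 × Fin 2)) :
    L19 z = (z (0, 0) + z (1, 1)) • tens e0 e0 := rfl

lemma L19_tens (a b : EuclideanSpace ℂ (Fin 2)) :
    L19 (tens a b) = (a 0 * b 0 + a 1 * b 1) • tens e0 e0 := rfl

/- A product `p a * q b` vanishing at `(e₁, e₂)` vanishes at `(e₁, e₁)` or at `(e₂, e₂)`;
the dot product does not. -/
lemma not_forall_mul_eq_dot (p q : EuclideanSpace ℂ (Fin 2) → ℂ) :
    ¬ ∀ a b, p a * q b = a 0 * b 0 + a 1 * b 1 := by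
  intro h
  have hx : p (EuclideanSpace.single 0 1) * q (EuclideanSpace.single 0 1) ≠ 0 := by simp [h]
  have hy : p (EuclideanSpace.single 1 1) * q (EuclideanSpace.single 1 1) ≠ 0 := by simp [h]
  exact mul_ne_zero_of_diag hx hy (by simp [h])

lemma not_forall_tens_eq_L19_tens (P Q : EuclideanSpace ℂ (Fin 2) → EuclideanSpace ℂ (Fin 2)) :
    ¬ ∀ a b, tens (P a) (Q b) = L19 (tens a b) := by
  intro h
  refine not_forall_mul_eq_dot (fun a => P a 0) (fun b => Q b 0) fun a b => ?_
  have := congrArg (· (0, 0)) (h a b)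
  simpa [tens_apply, L19_tens, e0] using this

/-- `L19` maps every vector to a scalar multiple of the separable vector `e₁ ⊗ e₁`, yet
neither `L19` nor `S·L19` (`S` the swap) is an elementary tensor `P ⊗ Q` of operators. -/
theorem stmt19 (Sw : EuclideanSpace ℂ (Fin 2 × Fin 2) →ₗ[ℂ] EuclideanSpace ℂ (Fin 2 × Fin 2))
    (hSw : ∀ a b : EuclideanSpace ℂ (Fin 2), Sw (tens a b) = tens b a) :
    (∀ z : EuclideanSpace ℂ (Fin 2 × Fin 2), ∃ c : ℂ, L19 z = c • tens e0 e0) ∧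
    (¬ ∃ P Q : EuclideanSpace ℂ (Fin 2) →ₗ[ℂ] EuclideanSpace ℂ (Fin 2),
      ∀ a b : EuclideanSpace ℂ (Fin 2), L19 (tens a b) = tens (P a) (Q b)) ∧
    (¬ ∃ P Q : EuclideanSpace ℂ (Fin 2) →ₗ[ℂ] EuclideanSpace ℂ (Fin 2),
      ∀ a b : EuclideanSpace ℂ (Fin 2), Sw (L19 (tens a b)) = tens (P a) (Q b)) := by
  have hSwL19 : ∀ z, Sw (L19 z) = L19 z := fun z => by
    rw [L19_apply, map_smul, hSw]
  refine ⟨fun z => ⟨_, L19_apply z⟩, ?_, ?_⟩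
  · rintro ⟨P, Q, h⟩
    exact not_forall_tens_eq_L19_tens P Q fun a b => (h a b).symm
  · rintro ⟨P, Q, h⟩
    exact not_forall_tens_eq_L19_tens P Q fun a b => by rw [← h, hSwL19]
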